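/- arXiv:1409.4344 — 5 statements merged into one kernel-verified Lean document; each statement's English description precedes it below -/
import Mathlib

section
/- Every finite set S of n ≥ 3 points in the Euclidean plane ℝ² in general position admits at least one polygonization. -/
open Real EuclideanGeometry
open scoped RealInnerProductSpace

noncomputable section

/-- The Euclidean plane ℝ². -/
abbrev Plane : Type := EuclideanSpace ℝ (Fin 2)

instance : Fact (Module.finrank ℝ Plane = 2) := ⟨finrank_euclideanSpace_fin⟩

/-- The standard orientation of the plane. -/
def planeOrientation : Orientation ℝ Plane (Fin 2) :=
  (EuclideanSpace.basisFun (Fin 2) ℝ).toBasis.orientation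

/-- The determinant `det(p, q)` of the 2×2 matrix with columns `p`, `q`. -/
def det2 (p q : Plane) : ℝ := p 0 * q 1 - p 1 * q 0

/-- A set of points is in general position if no three of its points are collinear. -/
def GeneralPosition (S : Set Plane) : Prop :=
  ∀ p ∈ S, ∀ q ∈ S, ∀ r ∈ S, p ≠ q → p ≠ r → q ≠ r →
    ¬ Collinear ℝ ({p, q, r} : Set Plane)

/-- `v : ZMod n → Plane` is a polygonization of `S`: a bijection from `ℤ/nℤ` onto `S`
such that the closed segments `[v i, v (i+1)]` form a simple closed polygon:
consecutive segments meet exactly in their common endpoint, and non-consecutive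
segments are disjoint. -/
def IsPolygonization (n : ℕ) (S : Set Plane) (v : ZMod n → Plane) : Prop :=
  Function.Injective v ∧ Set.range v = S ∧
  (∀ i : ZMod n,
    segment ℝ (v i) (v (i + 1)) ∩ segment ℝ (v (i + 1)) (v (i + 2)) = {v (i + 1)}) ∧
  (∀ i j : ZMod n, i ≠ j → i + 1 ≠ j → j + 1 ≠ i →
    Disjoint (segment ℝ (v i) (v (i + 1))) (segment ℝ (v j) (v (j + 1))))

/-- A polygonization is counterclockwise if its signed area
`(1/2)·Σ_i det(v i, v (i+1))` is positive. -/
def Counterclockwise (n : ℕ) (v : ZMod n → Plane) : Prop :=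
  0 < (1 / 2 : ℝ) * ∑ i ∈ Finset.range n, det2 (v (i : ZMod n)) (v ((i : ZMod n) + 1))

/-- The interior angle at vertex `v i` of a counterclockwise polygonization: the unique
real number in `(0, 2π)` congruent modulo `2π` to the oriented angle from
`v (i+1) - v i` to `v (i-1) - v i`. -/
def interiorAngle (n : ℕ) (v : ZMod n → Plane) (i : ZMod n) : ℝ :=
  let a := (planeOrientation.oangle (v (i + 1) - v i) (v (i - 1) - v i)).toReal
  if 0 < a then a else a + 2 * π

/-- A point `p` of `S` is an extreme point of the convex hull of `S` if it does not lie
in the convex hull of the other points of `S`. -/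
def IsExtremePt (S : Set Plane) (p : Plane) : Prop :=
  p ∈ S ∧ p ∉ convexHull ℝ (S \ {p})


section PolygonizationAux


lemma collinear_of_mem_segment {x u w : Plane} (h : x ∈ segment ℝ u w) :
    Collinear ℝ ({u, x, w} : Set Plane) :=
  (mem_segment_iff_wbtw.mp h).collinear

lemma collinear_pivot {x p b c : Plane} (hxp : x ≠ p)
    (h1 : Collinear ℝ ({p, x, b} : Set Plane)) (h2 : Collinear ℝ ({p, x, c} : Set Plane)) :
    Collinear ℝ ({p, b, c} : Set Plane) := by
  have hb : b ∈ line[ℝ, p, x] :=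
    h1.mem_affineSpan_of_mem_of_ne (by simp) (by simp) (by simp) (Ne.symm hxp)
  have hc : c ∈ line[ℝ, p, x] :=
    h2.mem_affineSpan_of_mem_of_ne (by simp) (by simp) (by simp) (Ne.symm hxp)
  exact (collinear_insert_insert_of_mem_affineSpan_pair hb hc).subset
    (by intro y hy; simp at hy ⊢; tauto)

lemma segment_inter_consecutive {a b c : Plane} (h : ¬ Collinear ℝ ({a, b, c} : Set Plane)) :
    segment ℝ a b ∩ segment ℝ b c = {b} := by
  apply Set.Subset.antisymm
  · rintro x ⟨h1, h2⟩
    simp only [Set.mem_singleton_iff]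
    by_contra hxb
    have c1 : Collinear ℝ ({b, x, a} : Set Plane) :=
      (collinear_of_mem_segment h1).subset (by intro y hy; simp at hy ⊢; tauto)
    have c2 : Collinear ℝ ({b, x, c} : Set Plane) :=
      (collinear_of_mem_segment h2).subset (by intro y hy; simp at hy ⊢; tauto)
    exact h ((collinear_pivot hxb c1 c2).subset (by intro y hy; simp at hy ⊢; tauto))
  · intro y hy
    simp only [Set.mem_singleton_iff] at hy
    subst hy
    exact ⟨right_mem_segment _ _ _, left_mem_segment _ _ _⟩

lemma crossing_dist_lt {a b c d x : Plane}
    (h1 : ¬ Collinear ℝ ({a, b, c} : Set Plane))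
    (h2 : ¬ Collinear ℝ ({a, b, d} : Set Plane))
    (h3 : ¬ Collinear ℝ ({c, d, a} : Set Plane))
    (h4 : ¬ Collinear ℝ ({c, d, b} : Set Plane))
    (hx1 : x ∈ segment ℝ a b) (hx2 : x ∈ segment ℝ c d) :
    dist a c + dist b d < dist a b + dist c d := by
  have hxa : x ≠ a := by
    rintro rfl
    exact h3 ((collinear_of_mem_segment hx2).subset (by intro y hy; simp at hy ⊢; tauto))
  have hxb : x ≠ b := by
    rintro rfl
    exact h4 ((collinear_of_mem_segment hx2).subset (by intro y hy; simp at hy ⊢; tauto))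
  have e1 : dist a x + dist x b = dist a b :=
    dist_add_dist_eq_iff.mpr (mem_segment_iff_wbtw.mp hx1)
  have e2 : dist c x + dist x d = dist c d :=
    dist_add_dist_eq_iff.mpr (mem_segment_iff_wbtw.mp hx2)
  have t1 : dist a c ≤ dist a x + dist x c := dist_triangle a x c
  have t2 : dist b d ≤ dist b x + dist x d := dist_triangle b x d
  by_contra hcon
  push_neg at hcon
  have hbx : dist b x = dist x b := dist_comm b x
  have hxc : dist x c = dist c x := dist_comm x c
  have heq : dist a x + dist x c = dist a c := by linarith
  have hw : Wbtw ℝ a x c := dist_add_dist_eq_iff.mp heq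
  have c1 : Collinear ℝ ({a, x, b} : Set Plane) :=
    (collinear_of_mem_segment hx1).subset (by intro y hy; simp at hy ⊢; tauto)
  have c2 : Collinear ℝ ({a, x, c} : Set Plane) := hw.collinear
  exact h1 (collinear_pivot hxa c1 c2)

noncomputable def tourLen (n : ℕ) [NeZero n] (v : ZMod n → Plane) : ℝ := ∑ k : ZMod n, dist (v k) (v (k + 1))

lemma tourLen_eq_range {n : ℕ} [NeZero n] (v : ZMod n → Plane) :
    tourLen n v = ∑ k ∈ Finset.range n, dist (v (k : ZMod n)) (v ((k : ZMod n) + 1)) := by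
  refine Finset.sum_nbij' (i := fun k => ZMod.val k) (j := fun k => (k : ZMod n)) ?_ ?_ ?_ ?_ ?_
  · intro a _; exact Finset.mem_range.mpr a.val_lt
  · intro a _; exact Finset.mem_univ _
  · intro a _; exact ZMod.natCast_zmod_val a
  · intro a ha; exact ZMod.val_cast_of_lt (Finset.mem_range.mp ha)
  · intro a _; rw [ZMod.natCast_zmod_val]

lemma tourLen_rotate {n : ℕ} [NeZero n] (v : ZMod n → Plane) (c : ZMod n) :
    tourLen n (fun k => v (k + c)) = tourLen n v := by
  unfold tourLen
  refine Fintype.sum_equiv (Equiv.addRight c) _ _ (fun k => ?_)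
  simp only [Equiv.coe_addRight]
  rw [add_right_comm]

lemma tour_reversal {n : ℕ} [NeZero n] (v : ZMod n → Plane) (m : ZMod n)
    (hm0 : m ≠ 0) (hm1 : m ≠ 1) (hmn : m + 1 ≠ 0) :
    ∃ σ : Equiv.Perm (ZMod n),
      tourLen n (v ∘ σ) + dist (v 0) (v 1) + dist (v m) (v (m + 1))
        = tourLen n v + dist (v 0) (v m) + dist (v 1) (v (m + 1)) := by
  obtain ⟨M, hM⟩ : ∃ M, m.val = M := ⟨m.val, rfl⟩
  have hmcast : ((M : ℕ) : ZMod n) = m := by rw [← hM]; exact ZMod.natCast_zmod_val m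
  have hMlt : M < n := hM ▸ m.val_lt
  have hM0 : M ≠ 0 := fun h => hm0 ((ZMod.val_eq_zero m).mp (hM.trans h))
  have hM1 : M ≠ 1 := by
    intro h
    apply hm1
    rw [← hmcast, h, Nat.cast_one]
  have hMn : M + 1 < n := by
    rcases Nat.lt_or_ge (M + 1) n with h | h
    · exact h
    · exfalso
      apply hmn
      have h2 : M + 1 = n := by omega
      rw [← hmcast, ← Nat.cast_one, ← Nat.cast_add, h2, ZMod.natCast_self]
  have hM2 : 2 ≤ M := by omega
  have castval : ∀ k : ℕ, k < n → ((k : ZMod n)).val = k := fun k hk => ZMod.val_cast_of_lt hk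
  have keyσ : ∀ k : ℕ, 1 ≤ k → k ≤ M → (m + 1) - (k : ZMod n) = ((M + 1 - k : ℕ) : ZMod n) := by
    intro k h1 h2
    rw [Nat.cast_sub (by omega), Nat.cast_add, Nat.cast_one, hmcast]
  set σfun : ZMod n → ZMod n :=
    fun k => if 1 ≤ k.val ∧ k.val ≤ M then (m + 1) - k else k with hσfun
  have σval : ∀ k : ℕ, k < n → σfun (k : ZMod n) =
      if 1 ≤ k ∧ k ≤ M then ((M + 1 - k : ℕ) : ZMod n) else (k : ZMod n) := by
    intro k hk
    rw [hσfun]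
    simp only [castval k hk]
    by_cases h : 1 ≤ k ∧ k ≤ M
    · rw [if_pos h, if_pos h, keyσ k h.1 h.2]
    · rw [if_neg h, if_neg h]
  have hinv : Function.Involutive σfun := by
    intro k
    obtain ⟨k, hk, rfl⟩ : ∃ j : ℕ, j < n ∧ k = (j : ZMod n) :=
      ⟨k.val, k.val_lt, (ZMod.natCast_zmod_val k).symm⟩
    rw [σval k hk]
    by_cases h : 1 ≤ k ∧ k ≤ M
    · rw [if_pos h, σval _ (by omega), if_pos (by omega)]
      congr 1
      omega
    · rw [if_neg h, σval k hk, if_neg h]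
  refine ⟨hinv.toPerm σfun, ?_⟩
  have hw : ∀ k : ℕ, k < n → (v ∘ σfun) ((k : ZMod n)) =
      if 1 ≤ k ∧ k ≤ M then v (((M + 1 - k : ℕ) : ZMod n)) else v ((k : ZMod n)) := by
    intro k hk
    simp only [Function.comp_apply, σval k hk, apply_ite v]
  have cast1 : ∀ k : ℕ, ((k : ZMod n)) + 1 = ((k + 1 : ℕ) : ZMod n) := by
    intro k; push_cast; ring
  set f : ℕ → ℝ := fun k => dist (v ((k : ZMod n))) (v ((k : ZMod n) + 1)) with hf
  set g : ℕ → ℝ :=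
    fun k => dist ((v ∘ σfun) ((k : ZMod n))) ((v ∘ σfun) ((k : ZMod n) + 1)) with hg
  -- edge value computations
  have hg0 : g 0 = dist (v 0) (v m) := by
    have e1 : (v ∘ σfun) (((0 : ℕ) : ZMod n)) = v (((0 : ℕ) : ZMod n)) := by
      rw [hw 0 (by omega), if_neg (by omega)]
    have e2 : (v ∘ σfun) (((1 : ℕ) : ZMod n)) = v m := by
      rw [hw 1 (by omega), if_pos (by omega)]
      rw [show M + 1 - 1 = M from by omega, hmcast]
    simp only [hg]
    rw [cast1 0, show (0 : ℕ) + 1 = 1 from rfl, e1, e2, Nat.cast_zero]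
  have hgM : g M = dist (v 1) (v (m + 1)) := by
    have e1 : (v ∘ σfun) (((M : ℕ) : ZMod n)) = v 1 := by
      rw [hw M hMlt, if_pos (by omega)]
      rw [show M + 1 - M = 1 from by omega, Nat.cast_one]
    have e2 : (v ∘ σfun) (((M : ℕ) : ZMod n) + 1) = v (m + 1) := by
      rw [cast1, hw (M + 1) hMn, if_neg (by omega), Nat.cast_add, Nat.cast_one, hmcast]
    simp only [hg]
    rw [e1, e2]
  have hgmid : ∀ k : ℕ, 1 ≤ k → k ≤ M - 1 → g k = f (M - k) := by
    intro k h1 h2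
    have e1 : (v ∘ σfun) ((k : ZMod n)) = v (((M + 1 - k : ℕ) : ZMod n)) := by
      rw [hw k (by omega), if_pos (by omega)]
    have e2 : (v ∘ σfun) ((k : ZMod n) + 1) = v (((M - k : ℕ) : ZMod n)) := by
      rw [cast1, hw (k + 1) (by omega), if_pos (by omega)]
      rw [show M + 1 - (k + 1) = M - k from by omega]
    simp only [hg, hf]
    rw [e1, e2, dist_comm, cast1 (M - k), show M - k + 1 = M + 1 - k from by omega]
  have hghigh : ∀ k : ℕ, M + 1 ≤ k → k < n → g k = f k := by
    intro k h1 h2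
    have e1 : (v ∘ σfun) ((k : ZMod n)) = v ((k : ZMod n)) := by
      rw [hw k h2, if_neg (by omega)]
    have e2 : (v ∘ σfun) ((k : ZMod n) + 1) = v ((k : ZMod n) + 1) := by
      rcases Nat.lt_or_ge (k + 1) n with h | h
      · rw [cast1, hw (k + 1) h, if_neg (by omega)]
      · have hkn : k + 1 = n := by omega
        have hcast0 : ((k : ZMod n)) + 1 = ((0 : ℕ) : ZMod n) := by
          rw [cast1, hkn, ZMod.natCast_self, Nat.cast_zero]
        rw [hcast0, hw 0 (by omega), if_neg (by omega)]
    simp only [hg, hf]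
    rw [e1, e2]
  -- sum manipulations
  have hsplit : ∀ h : ℕ → ℝ, ∑ k ∈ Finset.range n, h k
      = h 0 + h M + ∑ k ∈ ((Finset.range n).erase 0).erase M, h k := by
    intro h
    rw [← Finset.add_sum_erase _ h (Finset.mem_range.mpr (by omega : 0 < n)),
      ← Finset.add_sum_erase _ h
        (Finset.mem_erase.mpr ⟨hM0, Finset.mem_range.mpr hMlt⟩)]
    ring
  have hmem : ∀ k : ℕ, k ∈ ((Finset.range n).erase 0).erase M ↔ (k ≠ M ∧ k ≠ 0 ∧ k < n) := by
    intro k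
    simp [Finset.mem_erase, Finset.mem_range, and_assoc]
  have hA : ∑ k ∈ ((Finset.range n).erase 0).erase M, g k
      = ∑ k ∈ ((Finset.range n).erase 0).erase M, f k := by
    refine Finset.sum_nbij' (i := fun k => if k ≤ M then M - k else k)
      (j := fun k => if k ≤ M then M - k else k) ?_ ?_ ?_ ?_ ?_
    · intro a ha
      rw [hmem] at ha
      rw [hmem]
      split <;> omega
    · intro a ha
      rw [hmem] at ha
      rw [hmem]
      split <;> omega
    · intro a ha
      rw [hmem] at ha
      split_ifs <;> omega
    · intro a ha
      rw [hmem] at ha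
      split_ifs <;> omega
    · intro a ha
      rw [hmem] at ha
      by_cases h : a ≤ M
      · rw [if_pos h, hgmid a (by omega) (by omega)]
      · rw [if_neg h, hghigh a (by omega) (by omega)]
  have hf0 : f 0 = dist (v 0) (v 1) := by
    simp only [hf]
    rw [Nat.cast_zero, zero_add]
  have hfM : f M = dist (v m) (v (m + 1)) := by
    simp only [hf]
    rw [hmcast]
  have hLw : tourLen n (v ∘ (hinv.toPerm σfun)) = g 0 + g M
      + ∑ k ∈ ((Finset.range n).erase 0).erase M, g k := by
    rw [show (v ∘ (hinv.toPerm σfun)) = v ∘ σfun from rfl, tourLen_eq_range, hsplit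
      (fun k => dist ((v ∘ σfun) ((k : ZMod n))) ((v ∘ σfun) ((k : ZMod n) + 1)))]
  have hLv : tourLen n v = f 0 + f M + ∑ k ∈ ((Finset.range n).erase 0).erase M, f k := by
    rw [tourLen_eq_range, hsplit (fun k => dist (v ((k : ZMod n))) (v ((k : ZMod n) + 1)))]
  rw [hLw, hLv, hA, hg0, hgM, hf0, hfM]
  ring

end PolygonizationAux

/-- Every finite set of `n ≥ 3` points in the plane in general position admits at least one
polygonization. -/
theorem exists_polygonization (S : Finset Plane) (n : ℕ) (hn : 3 ≤ n) (hcard : S.card = n)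
    (hgp : GeneralPosition (S : Set Plane)) :
    ∃ v : ZMod n → Plane, IsPolygonization n (S : Set Plane) v := by
  classical
  haveI : NeZero n := ⟨by omega⟩
  -- small index facts
  have hone : (1 : ZMod n) ≠ 0 := by
    intro h
    have h1 : ((1 : ℕ) : ZMod n).val = 1 := ZMod.val_cast_of_lt (by omega)
    rw [Nat.cast_one, h, ZMod.val_zero] at h1
    omega
  have htwo : (2 : ZMod n) ≠ 0 := by
    intro h
    have h1 : ((2 : ℕ) : ZMod n).val = 2 := ZMod.val_cast_of_lt (by omega)
    rw [Nat.cast_ofNat, h, ZMod.val_zero] at h1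
    omega
  have hone2 : (1 : ZMod n) ≠ 2 := by
    intro h
    have h1 : ((1 : ℕ) : ZMod n).val = 1 := ZMod.val_cast_of_lt (by omega)
    have h2 : ((2 : ℕ) : ZMod n).val = 2 := ZMod.val_cast_of_lt (by omega)
    rw [Nat.cast_one, h] at h1
    rw [Nat.cast_ofNat] at h2
    omega
  have hi1 : ∀ i : ZMod n, i ≠ i + 1 := by
    intro i h
    rw [left_eq_add] at h
    exact hone h
  have hi2 : ∀ i : ZMod n, i ≠ i + 2 := by
    intro i h
    rw [left_eq_add] at h
    exact htwo h
  have hi12 : ∀ i : ZMod n, i + 1 ≠ i + 2 := by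
    intro i h
    exact hone2 (add_left_cancel h)
  -- minimizer over all tours
  have hce : Fintype.card (ZMod n) = Fintype.card {x // x ∈ S} := by
    rw [ZMod.card, Fintype.card_coe, hcard]
  obtain ⟨e, -, hmin⟩ := Finset.exists_min_image (Finset.univ : Finset (ZMod n ≃ {x // x ∈ S}))
    (fun e => tourLen n (fun k => ((e k : Plane)))) ⟨Fintype.equivOfCardEq hce, Finset.mem_univ _⟩
  set v : ZMod n → Plane := fun k => ((e k : Plane)) with hv
  have hinj : Function.Injective v := fun a b hab => e.injective (Subtype.coe_injective hab)
  have hmemS : ∀ k, v k ∈ (S : Set Plane) := fun k => (e k).2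
  have hrange : Set.range v = (S : Set Plane) := by
    rw [hv, show (fun k => ((e k : Plane))) = Subtype.val ∘ e from rfl,
      e.surjective.range_comp, Subtype.range_coe]
  refine ⟨v, hinj, hrange, ?_, ?_⟩
  · intro i
    exact segment_inter_consecutive
      (hgp _ (hmemS i) _ (hmemS (i + 1)) _ (hmemS (i + 2))
        (hinj.ne (hi1 i)) (hinj.ne (hi2 i)) (hinj.ne (hi12 i)))
  · intro i j hij h1j hj1
    rw [Set.disjoint_left]
    intro x hx1 hx2
    have hij1 : i + 1 ≠ j + 1 := fun h => hij (add_right_cancel h)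
    have hcr : dist (v i) (v j) + dist (v (i + 1)) (v (j + 1))
        < dist (v i) (v (i + 1)) + dist (v j) (v (j + 1)) := by
      refine crossing_dist_lt ?_ ?_ ?_ ?_ hx1 hx2
      · exact hgp _ (hmemS i) _ (hmemS (i + 1)) _ (hmemS j)
          (hinj.ne (hi1 i)) (hinj.ne hij) (hinj.ne h1j)
      · exact hgp _ (hmemS i) _ (hmemS (i + 1)) _ (hmemS (j + 1))
          (hinj.ne (hi1 i)) (hinj.ne (Ne.symm hj1)) (hinj.ne hij1)
      · exact hgp _ (hmemS j) _ (hmemS (j + 1)) _ (hmemS i)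
          (hinj.ne (hi1 j)) (hinj.ne (Ne.symm hij)) (hinj.ne hj1)
      · exact hgp _ (hmemS j) _ (hmemS (j + 1)) _ (hmemS (i + 1))
          (hinj.ne (hi1 j)) (hinj.ne (Ne.symm h1j)) (hinj.ne (Ne.symm hij1))
    -- 2-opt improvement
    set v' : ZMod n → Plane := fun k => v (k + i) with hv'
    have hm0 : j - i ≠ 0 := sub_ne_zero.mpr (Ne.symm hij)
    have hm1 : j - i ≠ 1 := by
      intro h
      apply h1j
      have := sub_eq_iff_eq_add.mp h
      rw [this, add_comm]
    have hmn : (j - i) + 1 ≠ 0 := by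
      intro h
      apply hj1
      have : (j - i) + 1 + i = 0 + i := by rw [h]
      rw [zero_add] at this
      rw [← this]
      ring
    obtain ⟨σ, hσ⟩ := tour_reversal v' (j - i) hm0 hm1 hmn
    have e0 : v' 0 = v i := by rw [hv']; simp
    have e1 : v' 1 = v (i + 1) := by rw [hv']; rw [add_comm]
    have em : v' (j - i) = v j := by rw [hv']; simp
    have em1 : v' ((j - i) + 1) = v (j + 1) := by
      show v (j - i + 1 + i) = v (j + 1)
      ring_nf
    rw [e0, e1, em, em1, tourLen_rotate v i] at hσ
    have hlt : tourLen n (v' ∘ σ) < tourLen n v := by linarith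
    have hco : (fun k => ((((σ.trans (Equiv.addRight i)).trans e) k : Plane))) = v' ∘ σ := rfl
    have := hmin ((σ.trans (Equiv.addRight i)).trans e) (Finset.mem_univ _)
    rw [hco] at this
    exact absurd this (not_le.mpr hlt)
end
end

section
/- Let S be a finite nonempty set of points in the Euclidean plane ℝ² and let d ∈ ℝ² be a point not belonging to the convex hull of S. Then there exist points x, y ∈ S such that the convex hull of S is contained in the cone {d + α·(x − d) + β·(y − d) : α ≥ 0, β ≥ 0}. -/
open Real EuclideanGeometry
open scoped RealInnerProductSpace

noncomputable section

/-!
Separate `d` from the convex hull of `S` by a vector `a`, so that every `s - d` with `s ∈ S`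
lies in the open half plane `⟪a, ·⟫ > 0`. Within that half plane, directions are ordered by the
slope `ω(a, v) / ⟪a, v⟫` of the area form `ω` (the tangent of the angle from `a` to `v`).
Taking `x` and `y` of minimal and maximal slope, every `s - d` is a nonnegative combination of
`x - d` and `y - d`; since the cone at `d` they span is convex, it contains the convex hull of `S`.
-/

theorem exists_forall_inner_sub_pos_of_notMem_convexHull {E : Type*} [NormedAddCommGroup E]
    [InnerProductSpace ℝ E] [CompleteSpace E] {S : Set E} (hS : S.Finite) {d : E}
    (hd : d ∉ convexHull ℝ S) : ∃ a : E, ∀ s ∈ S, 0 < ⟪a, s - d⟫ := by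
  obtain ⟨f, c, hfd, hfS⟩ := geometric_hahn_banach_point_closed (convex_convexHull ℝ S)
    (hS.isClosed_convexHull (𝕜 := ℝ)) hd
  refine ⟨(InnerProductSpace.toDual ℝ E).symm f, fun s hs => ?_⟩
  have hfs := hfS s (subset_convexHull ℝ S hs)
  rw [InnerProductSpace.toDual_symm_apply, map_sub]
  linarith

theorem convex_setOf_eq_add_smul_add_smul {𝕜 E : Type*} [Field 𝕜] [LinearOrder 𝕜]
    [IsStrictOrderedRing 𝕜] [AddCommGroup E] [Module 𝕜 E] (d u w : E) :
    Convex 𝕜 {p : E | ∃ α β : 𝕜, 0 ≤ α ∧ 0 ≤ β ∧ p = d + α • u + β • w} := by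
  rintro _ ⟨α₁, β₁, hα₁, hβ₁, rfl⟩ _ ⟨α₂, β₂, hα₂, hβ₂, rfl⟩ s t hs ht hst
  refine ⟨s * α₁ + t * α₂, s * β₁ + t * β₂, by positivity, by positivity, ?_⟩
  obtain rfl := eq_sub_of_add_eq' hst
  module

namespace Orientation

variable {E : Type*} [NormedAddCommGroup E] [InnerProductSpace ℝ E]
  [Fact (Module.finrank ℝ E = 2)] (o : Orientation ℝ E (Fin 2))

theorem eq_zero_of_inner_eq_zero_of_areaForm_eq_zero {a z : E} (ha : a ≠ 0)
    (h₁ : ⟪a, z⟫ = 0) (h₂ : o.areaForm a z = 0) : z = 0 := by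
  have h := o.inner_sq_add_areaForm_sq a z
  rw [h₁, h₂] at h
  simpa [ha] using h

def slope (a v : E) : ℝ := o.areaForm a v / ⟪a, v⟫

theorem exists_nonneg_smul_add_smul_of_slope_le_of_slope_le {a u v w : E}
    (hu : 0 < ⟪a, u⟫) (hv : 0 < ⟪a, v⟫) (hw : 0 < ⟪a, w⟫)
    (huv : o.slope a u ≤ o.slope a v) (hvw : o.slope a v ≤ o.slope a w) :
    ∃ α β : ℝ, 0 ≤ α ∧ 0 ≤ β ∧ v = α • u + β • w := by
  have ha : a ≠ 0 := by rintro rfl; simp at hu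
  obtain ⟨θ, η, hθ, hη, hθη, hslope⟩ :
      o.slope a v ∈ segment ℝ (o.slope a u) (o.slope a w) := by
    rw [segment_eq_Icc (huv.trans hvw)]
    exact ⟨huv, hvw⟩
  refine ⟨⟪a, v⟫ * θ / ⟪a, u⟫, ⟪a, v⟫ * η / ⟪a, w⟫, by positivity, by positivity, ?_⟩
  rw [← sub_eq_zero]
  apply o.eq_zero_of_inner_eq_zero_of_areaForm_eq_zero ha
  · simp only [inner_sub_right, inner_add_right, inner_smul_right]
    rw [div_mul_cancel₀ _ hu.ne', div_mul_cancel₀ _ hw.ne']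
    linear_combination (-⟪a, v⟫) * hθη
  · simp only [slope, smul_eq_mul] at hslope
    rw [eq_div_iff hv.ne'] at hslope
    simp only [map_sub, map_add, map_smul, smul_eq_mul]
    linear_combination (-1 : ℝ) * hslope

end Orientation

/-- If `d` lies outside the convex hull of a finite nonempty set `S` of points in the plane,
then there are points `x, y ∈ S` such that the convex hull of `S` is contained in the cone
at `d` spanned by the directions `x − d` and `y − d`. -/
theorem convexHull_subset_cone (S : Finset Plane) (hS : S.Nonempty) (d : Plane)
    (hd : d ∉ convexHull ℝ (S : Set Plane)) :
    ∃ x ∈ S, ∃ y ∈ S, convexHull ℝ (S : Set Plane) ⊆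
      {p : Plane | ∃ α β : ℝ, 0 ≤ α ∧ 0 ≤ β ∧ p = d + α • (x - d) + β • (y - d)} := by
  obtain ⟨a, ha⟩ := exists_forall_inner_sub_pos_of_notMem_convexHull S.finite_toSet hd
  let slope (s : Plane) : ℝ := planeOrientation.slope a (s - d)
  obtain ⟨x, hx, hx_min⟩ := S.exists_min_image slope hS
  obtain ⟨y, hy, hy_max⟩ := S.exists_max_image slope hS
  refine ⟨x, hx, y, hy, convexHull_min (fun s hs => ?_) (convex_setOf_eq_add_smul_add_smul _ _ _)⟩
  obtain ⟨α, β, hα, hβ, hs_eq⟩ :=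
    planeOrientation.exists_nonneg_smul_add_smul_of_slope_le_of_slope_le (ha x hx) (ha s hs)
      (ha y hy) (hx_min s hs) (hy_max s hs)
  exact ⟨α, β, hα, hβ, by rw [add_assoc, ← hs_eq, add_sub_cancel]⟩
end
end

section
/- Let d ∈ ℝ² and let x_0, x_1, …, x_{k+1} be distinct points of ℝ², all distinct from d, such that: (i) there is a vector u with ⟪x_j − d, u⟫ > 0 for every j (all points lie in an open half-plane whose boundary line passes through d); (ii) no two of the points x_i, x_j (i ≠ j) are collinear with d; and (iii) the points are angularly sorted around d, i.e., the oriented angles from u to x_j − d (which lie in (−π/2, π/2)) are strictly increasing in j. Then the polygonal path with edges [x_j, x_{j+1}] for j = 0, …, k is simple: any two consecutive segments [x_{j}, x_{j+1}] and [x_{j+1}, x_{j+2}] intersect exactly in the point x_{j+1}, and any two non-consecutive segments are disjoint. -/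
open Real EuclideanGeometry
open scoped RealInnerProductSpace

noncomputable section

/-!
Measure everything from `d` and write `ω` for the area form. For two vectors `a`, `b` in the
open half-plane `⟪·, u⟫ > 0`, the oriented angles from `u` lie in `(-π/2, π/2)`, so the angle
from `a` to `b` lies in `(-π, π)` and `ω a b > 0` exactly when `a` comes before `b`. If
`v ∈ [a, b]` and `ω a b ≥ 0`, then `ω a v ≥ 0` and `ω v b ≥ 0`: a point of an edge lies
angularly between its endpoints (and stays in the half-plane by convexity). Hence two edges
sharing no endpoint occupy disjoint angular ranges, and two consecutive edges can only meet on
the ray through their common endpoint, which each of them meets only in that endpoint.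
-/

namespace Orientation

variable {V : Type*} [NormedAddCommGroup V] [InnerProductSpace ℝ V]
  [Fact (Module.finrank ℝ V = 2)] (o : Orientation ℝ V (Fin 2))

theorem areaForm_eq_norm_mul_norm_mul_sin_oangle (x y : V) :
    o.areaForm x y = ‖x‖ * ‖y‖ * Real.Angle.sin (o.oangle x y) := by
  by_cases hx : x = 0; · simp [hx]
  by_cases hy : y = 0; · simp [hy]
  rw [oangle, Real.Angle.sin_coe, Complex.sin_arg, o.norm_kahler]
  simp only [kahler_apply_apply, Complex.real_smul, Complex.add_im, Complex.ofReal_im,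
    Complex.mul_im, Complex.I_im, Complex.I_re, Complex.ofReal_re, mul_one, mul_zero, zero_add,
    add_zero]
  field_simp [norm_ne_zero_iff.2 hx, norm_ne_zero_iff.2 hy]

theorem abs_toReal_oangle_lt_pi_div_two_of_inner_pos {x y : V} (h : 0 < ⟪x, y⟫) :
    |(o.oangle x y).toReal| < π / 2 := by
  rw [← Real.Angle.cos_pos_iff_abs_toReal_lt_pi_div_two]
  rw [o.inner_eq_norm_mul_norm_mul_cos_oangle] at h
  exact pos_of_mul_pos_right h (by positivity)

theorem areaForm_pos_of_toReal_oangle_lt {u a b : V} (ha : 0 < ⟪a, u⟫) (hb : 0 < ⟪b, u⟫)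
    (h : (o.oangle u a).toReal < (o.oangle u b).toReal) : 0 < o.areaForm a b := by
  have ha₀ : a ≠ 0 := by rintro rfl; simp at ha
  have hb₀ : b ≠ 0 := by rintro rfl; simp at hb
  have hu₀ : u ≠ 0 := by rintro rfl; simp at ha
  have hθa := abs_lt.1 (o.abs_toReal_oangle_lt_pi_div_two_of_inner_pos (real_inner_comm a u ▸ ha))
  have hθb := abs_lt.1 (o.abs_toReal_oangle_lt_pi_div_two_of_inner_pos (real_inner_comm b u ▸ hb))
  have hab : o.oangle a b = ↑((o.oangle u b).toReal - (o.oangle u a).toReal) := by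
    rw [Real.Angle.coe_sub, Real.Angle.coe_toReal, Real.Angle.coe_toReal,
      o.oangle_sub_left hu₀ ha₀ hb₀]
  have hsin : 0 < Real.Angle.sin (o.oangle a b) := by
    rw [hab, Real.Angle.sin_coe]
    exact Real.sin_pos_of_pos_of_lt_pi (by linarith) (by linarith)
  rw [o.areaForm_eq_norm_mul_norm_mul_sin_oangle]
  have := norm_pos_iff.2 ha₀
  have := norm_pos_iff.2 hb₀
  positivity

theorem toReal_oangle_le_of_areaForm_nonneg {u a b : V} (ha : 0 < ⟪a, u⟫) (hb : 0 < ⟪b, u⟫)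
    (h : 0 ≤ o.areaForm a b) : (o.oangle u a).toReal ≤ (o.oangle u b).toReal := by
  by_contra! hlt
  have := o.areaForm_pos_of_toReal_oangle_lt hb ha hlt
  rw [o.areaForm_swap] at this
  linarith

theorem areaForm_nonneg_of_mem_segment_left {a b v : V} (hv : v ∈ segment ℝ a b)
    (h : 0 ≤ o.areaForm a b) : 0 ≤ o.areaForm a v := by
  obtain ⟨s, t, -, ht, -, rfl⟩ := hv
  simp only [map_add, map_smul, smul_eq_mul, areaForm_apply_self, mul_zero, zero_add]
  positivity

theorem areaForm_nonneg_of_mem_segment_right {a b v : V} (hv : v ∈ segment ℝ a b)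
    (h : 0 ≤ o.areaForm a b) : 0 ≤ o.areaForm v b := by
  obtain ⟨s, t, hs, -, -, rfl⟩ := hv
  simp only [map_add, map_smul, LinearMap.add_apply, LinearMap.smul_apply, smul_eq_mul,
    areaForm_apply_self, mul_zero, add_zero]
  positivity

theorem eq_right_of_mem_segment_of_areaForm_nonpos {a b v : V} (hv : v ∈ segment ℝ a b)
    (h : 0 < o.areaForm a b) (hvb : o.areaForm v b ≤ 0) : v = b := by
  obtain ⟨s, t, hs, -, hst, rfl⟩ := hv
  simp only [map_add, map_smul, LinearMap.add_apply, LinearMap.smul_apply, smul_eq_mul,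
    areaForm_apply_self, mul_zero, add_zero] at hvb
  obtain rfl : s = 0 := le_antisymm (nonpos_of_mul_nonpos_left hvb h) hs
  simp [show t = 1 by linarith]

end Orientation

theorem sub_mem_segment_sub {V : Type*} [AddCommGroup V] [Module ℝ V] {a b p : V} (d : V)
    (hp : p ∈ segment ℝ a b) : p - d ∈ segment ℝ (a - d) (b - d) := by
  simpa [sub_eq_neg_add] using (mem_segment_translate ℝ (-d)).2 hp

theorem angularly_sorted_path_is_simple_general (k : ℕ) (d : Plane) (x : ℕ → Plane) (u : Plane)
    (hu : ∀ j ≤ k + 1, 0 < ⟪x j - d, u⟫)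
    (hsorted : ∀ i ≤ k + 1, ∀ j ≤ k + 1, i < j →
      (planeOrientation.oangle u (x i - d)).toReal <
        (planeOrientation.oangle u (x j - d)).toReal) :
    (∀ j, j + 1 ≤ k →
      segment ℝ (x j) (x (j + 1)) ∩ segment ℝ (x (j + 1)) (x (j + 2)) = {x (j + 1)}) ∧
    (∀ i j, j ≤ k → i + 1 < j →
      Disjoint (segment ℝ (x i) (x (i + 1))) (segment ℝ (x j) (x (j + 1)))) := by
  set o := planeOrientation
  have hω : ∀ i j, i < j → j ≤ k + 1 → 0 < o.areaForm (x i - d) (x j - d) := fun i j hij hj =>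
    o.areaForm_pos_of_toReal_oangle_lt (hu i (by omega)) (hu j hj) (hsorted i (by omega) j hj hij)
  constructor
  · intro j hj
    refine Set.eq_singleton_iff_unique_mem.2
      ⟨⟨right_mem_segment ℝ _ _, left_mem_segment ℝ _ _⟩, fun p ⟨hp₁, hp₂⟩ => ?_⟩
    have hnext := o.areaForm_nonneg_of_mem_segment_left (sub_mem_segment_sub d hp₂)
      (hω (j + 1) (j + 2) (by omega) (by omega)).le
    rw [o.areaForm_swap, neg_nonneg] at hnext
    exact sub_left_injective (o.eq_right_of_mem_segment_of_areaForm_nonpos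
      (sub_mem_segment_sub d hp₁) (hω j (j + 1) (by omega) (by omega)) hnext)
  · intro i j hj hij
    refine Set.disjoint_left.2 fun p hp₁ hp₂ => ?_
    have hp : 0 < ⟪p - d, u⟫ :=
      (convex_halfSpace_gt ((innerₛₗ ℝ).flip u).isLinear 0
        |>.segment_subset (hu j (by omega)) (hu (j + 1) (by omega))) (sub_mem_segment_sub d hp₂)
    have hbefore := o.toReal_oangle_le_of_areaForm_nonneg hp (hu (i + 1) (by omega))
      (o.areaForm_nonneg_of_mem_segment_right (sub_mem_segment_sub d hp₁)
        (hω i (i + 1) (by omega) (by omega)).le)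
    have hafter := o.toReal_oangle_le_of_areaForm_nonneg (hu j (by omega)) hp
      (o.areaForm_nonneg_of_mem_segment_left (sub_mem_segment_sub d hp₂)
        (hω j (j + 1) (by omega) (by omega)).le)
    linarith [hsorted (i + 1) (by omega) j (by omega) hij]

/-- Let `x 0, x 1, …, x (k+1)` be distinct points, all distinct from `d`, lying in an open
half-plane bounded by a line through `d` (witnessed by the vector `u`), no two collinear
with `d`, and angularly sorted around `d` (the oriented angles from `u` to `x j − d`, which
lie in `(−π/2, π/2)`, are strictly increasing). Then the polygonal path with edges
`[x j, x (j+1)]` for `j = 0, …, k` is simple: consecutive segments intersect exactly in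
their common endpoint and non-consecutive segments are disjoint. -/
theorem angularly_sorted_path_is_simple (k : ℕ) (d : Plane) (x : ℕ → Plane) (u : Plane)
    (hinj : ∀ i ≤ k + 1, ∀ j ≤ k + 1, x i = x j → i = j)
    (hd : ∀ j ≤ k + 1, x j ≠ d)
    (hu : ∀ j ≤ k + 1, 0 < ⟪x j - d, u⟫)
    (hcol : ∀ i ≤ k + 1, ∀ j ≤ k + 1, i ≠ j → ¬ Collinear ℝ ({d, x i, x j} : Set Plane))
    (hsorted : ∀ i ≤ k + 1, ∀ j ≤ k + 1, i < j →
      (planeOrientation.oangle u (x i - d)).toReal <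
        (planeOrientation.oangle u (x j - d)).toReal) :
    (∀ j, j + 1 ≤ k →
      segment ℝ (x j) (x (j + 1)) ∩ segment ℝ (x (j + 1)) (x (j + 2)) = {x (j + 1)}) ∧
    (∀ i j, j ≤ k → i + 1 < j →
      Disjoint (segment ℝ (x i) (x (i + 1))) (segment ℝ (x j) (x (j + 1)))) :=
  angularly_sorted_path_is_simple_general k d x u hu hsorted
end
end

section
/- Let o ∈ ℝ², r > 0, and let a, b be points on the circle of center o and radius r (dist(a, o) = dist(b, o) = r). Let s be a point strictly inside the circle (dist(s, o) < r), with s ≠ a and s ≠ b. Then the unoriented central angle satisfies ∠ a o b ≤ 2 · ∠ a s b, where ∠ x y z denotes the unoriented angle at vertex y between the rays toward x and z, taking values in [0, π]. -/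
open Real EuclideanGeometry
open scoped RealInnerProductSpace

/-!
Extend the chord from `a` through `s` to the second point `p` where it meets the circle.
Then `∠ a p b ≤ ∠ a s b` by the exterior angle theorem in the triangle `s p b`, and the
inscribed angle theorem gives `∡ a o b = 2 • ∡ a p b` for oriented angles, which yields
`∠ a o b ≤ 2 ∠ a p b` for the unoriented ones.
-/

theorem Real.Angle.abs_toReal_two_zsmul_le (θ : Real.Angle) :
    |((2 : ℤ) • θ).toReal| ≤ 2 * |θ.toReal| := by
  rcases le_or_gt (π / 2) |θ.toReal| with hθ | hθ
  · linarith [Real.Angle.abs_toReal_le_pi ((2 : ℤ) • θ)]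
  · obtain ⟨hθ₁, hθ₂⟩ := abs_lt.1 hθ
    rw [Real.Angle.two_zsmul_toReal_eq_two_mul.2 ⟨by linarith, hθ₂.le⟩, abs_mul, abs_two]

namespace EuclideanGeometry

variable {V P : Type*} [NormedAddCommGroup V] [InnerProductSpace ℝ V] [MetricSpace P]
  [NormedAddTorsor V P]

theorem angle_le_angle_of_sbtw {p₁ p₂ p₃ : P} (h : Sbtw ℝ p₁ p₂ p₃) (p : P) :
    ∠ p₁ p₃ p ≤ ∠ p₁ p₂ p := by
  have hext := exterior_angle_eq_angle_add_angle (p₃ := p) p₁ h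
  rw [h.symm.angle_eq_right p, angle_comm p p₂ p₁, angle_comm p p₃ p₁] at hext
  linarith [angle_nonneg p₂ p p₃]

theorem Sphere.angle_center_le_two_mul_angle [Fact (Module.finrank ℝ V = 2)] {s : Sphere P}
    {p₁ p₂ p₃ : P} (hp₁ : p₁ ∈ s) (hp₂ : p₂ ∈ s) (hp₃ : p₃ ∈ s) (hp₂p₁ : p₂ ≠ p₁)
    (hp₂p₃ : p₂ ≠ p₃) : ∠ p₁ s.center p₃ ≤ 2 * ∠ p₁ p₂ p₃ := by
  have : FiniteDimensional ℝ V := .of_fact_finrank_eq_two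
  have : Module.Oriented ℝ V (Fin 2) :=
    ⟨(Module.finBasisOfFinrankEq ℝ V Fact.out).orientation⟩
  rw [angle_eq_abs_oangle_toReal (s.ne_center_of_mem_of_mem_of_ne hp₁ hp₂ hp₂p₁.symm)
      (s.ne_center_of_mem_of_mem_of_ne hp₃ hp₂ hp₂p₃.symm),
    angle_eq_abs_oangle_toReal hp₂p₁.symm hp₂p₃.symm,
    Sphere.oangle_center_eq_two_zsmul_oangle hp₁ hp₂ hp₃ hp₂p₁ hp₂p₃]
  exact Real.Angle.abs_toReal_two_zsmul_le _

end EuclideanGeometry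

theorem central_angle_le_two_mul_angle_general (o a b s : Plane) (r : ℝ)
    (ha : dist a o = r) (hb : dist b o = r) (hs : dist s o < r) :
    EuclideanGeometry.angle a o b ≤ 2 * EuclideanGeometry.angle a s b := by
  let circle : Sphere Plane := ⟨o, r⟩
  set p := circle.secondInter a (s -ᵥ a)
  have hsbtw : Sbtw ℝ a s p := Sphere.sbtw_secondInter ha hs
  by_cases hpb : p = b
  · rw [← hpb, hsbtw.angle₁₂₃_eq_pi]
    linarith [angle_le_pi a o p, pi_pos]
  calc ∠ a o b ≤ 2 * ∠ a p b :=
        Sphere.angle_center_le_two_mul_angle (s := circle) ha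
          ((Sphere.secondInter_mem _).2 ha) hb hsbtw.left_ne_right.symm hpb
    _ ≤ 2 * ∠ a s b := by gcongr; exact angle_le_angle_of_sbtw hsbtw b

/-- If `a` and `b` lie on the circle of center `o` and radius `r > 0`, and `s` lies strictly
inside the circle with `s ≠ a` and `s ≠ b`, then the central angle `∠ a o b` is at most
twice the angle `∠ a s b`. -/
theorem central_angle_le_two_mul_angle (o a b s : Plane) (r : ℝ) (hr : 0 < r)
    (ha : dist a o = r) (hb : dist b o = r) (hs : dist s o < r)
    (hsa : s ≠ a) (hsb : s ≠ b) :
    EuclideanGeometry.angle a o b ≤ 2 * EuclideanGeometry.angle a s b :=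
  central_angle_le_two_mul_angle_general o a b s r ha hb hs
end

section
/- Let n ≥ 4 with n − 1 odd, let o ∈ ℝ² and r > 0, and let S be the set consisting of the center o together with the n − 1 points o + r·(cos(2πk/(n−1)), sin(2πk/(n−1))) for k = 0, 1, …, n − 2 (n − 1 points equally spaced around a circle of radius r, plus its center). Then every counterclockwise polygonization of S has some interior angle of measure at least 2π − 2π/(n−1). -/
/-!
Start the polygon at the center: it reads `o, w 0, …, w (m - 1)` with `m = n - 1` odd, and the
circle vertex `w t` sits at position `P t` of the regular `m`-gon, counted from `w 0`. By induction
the path never jumps over an unvisited position: such a jump forces a later edge to cross the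
jumping chord, unless it lands on the position just behind `w 0`, in which case, `m` being odd,
one of the two radii `[o, w 0]`, `[w (m - 1), o]` crosses the chord. Hence, after possibly
reversing the direction of counting, `P t = t`: the polygon is a fan. In the reversed direction the
fan is clockwise; otherwise its interior angle at `o` is `2π - 2π/m`.
-/

open Real EuclideanGeometry
open scoped RealInnerProductSpace

noncomputable section

/-- The point of the plane with coordinates `(a, b)`. -/
def planePt (a b : ℝ) : Plane := WithLp.toLp 2 ![a, b]

lemma det2_swap (p q : Plane) : det2 p q = -det2 q p := by
  unfold det2; ring

lemma planeOrientation_areaForm (x y : Plane) : planeOrientation.areaForm x y = det2 x y := by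
  have h := planeOrientation.volumeForm_robust (EuclideanSpace.basisFun (Fin 2) ℝ) rfl
  rw [Orientation.areaForm_to_volumeForm, h, Module.Basis.det_apply, Matrix.det_fin_two]
  simp only [Module.Basis.toMatrix, Fin.isValue, Matrix.cons_val_zero,
    OrthonormalBasis.coe_toBasis_repr_apply, EuclideanSpace.basisFun_repr, Matrix.cons_val_one,
    Matrix.cons_val_fin_one, det2, sub_right_inj]
  ring

lemma inner_plane (x y : Plane) : ⟪x, y⟫ = x 0 * y 0 + x 1 * y 1 := by
  simp only [PiLp.inner_apply, RCLike.inner_apply, conj_trivial, Fin.sum_univ_two]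
  ring

lemma inv_sub_smul_mem_segment {a b : ℝ} (h : a * b < 0) (x y : Plane) :
    (a - b)⁻¹ • (a • y - b • x) ∈ segment ℝ x y := by
  have hab : a - b ≠ 0 := fun h' ↦ by rw [sub_eq_zero.1 h'] at h; nlinarith [mul_self_nonneg b]
  refine ⟨-b / (a - b), a / (a - b), ?_, ?_, by field_simp; ring, by module⟩ <;>
    rcases mul_neg_iff.1 h with ⟨ha, hb⟩ | ⟨ha, hb⟩
  all_goals first
    | exact div_nonneg (by linarith) (by linarith)
    | exact div_nonneg_of_nonpos (by linarith) (by linarith)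

theorem not_disjoint_segment_of_det2_mul_neg {A B C D : Plane}
    (hAB : det2 (B - A) (C - A) * det2 (B - A) (D - A) < 0)
    (hCD : det2 (D - C) (A - C) * det2 (D - C) (B - C) < 0) :
    ¬ Disjoint (segment ℝ A B) (segment ℝ C D) := by
  have hsub : det2 (D - C) (A - C) - det2 (D - C) (B - C)
      = det2 (B - A) (D - A) - det2 (B - A) (C - A) := by
    simp only [det2, PiLp.sub_apply]; ring
  -- each side is the crossing point of the lines `AB` and `CD`, scaled by the two sides of `hsub`
  have hcramer : det2 (D - C) (A - C) • B - det2 (D - C) (B - C) • A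
      = det2 (B - A) (D - A) • C - det2 (B - A) (C - A) • D := by
    ext i
    fin_cases i <;>
      simp only [det2, Fin.isValue, PiLp.sub_apply, Fin.zero_eta, Fin.mk_one, PiLp.smul_apply,
        smul_eq_mul] <;>
      ring
  refine Set.not_disjoint_iff.2 ⟨_, inv_sub_smul_mem_segment hCD A B, ?_⟩
  rw [hsub, hcramer, segment_symm]
  exact inv_sub_smul_mem_segment (by rwa [mul_comm]) D C

lemma planePt_apply_zero (a b : ℝ) : planePt a b 0 = a := rfl

lemma planePt_apply_one (a b : ℝ) : planePt a b 1 = b := rfl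

def circlePt (o : Plane) (r θ : ℝ) : Plane := o + r • planePt (cos θ) (sin θ)

lemma circlePt_apply_zero (o : Plane) (r θ : ℝ) : circlePt o r θ 0 = o 0 + r * cos θ := rfl

lemma circlePt_apply_one (o : Plane) (r θ : ℝ) : circlePt o r θ 1 = o 1 + r * sin θ := rfl

lemma circlePt_add_int_mul_two_pi (o : Plane) (r θ : ℝ) (k : ℤ) :
    circlePt o r (θ + k * (2 * π)) = circlePt o r θ := by
  simp only [circlePt, cos_add_int_mul_two_pi, sin_add_int_mul_two_pi]

lemma det2_circlePt_sub_center (o : Plane) (r α β : ℝ) :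
    det2 (circlePt o r α - o) (circlePt o r β - o) = r ^ 2 * sin (β - α) := by
  simp only [det2, PiLp.sub_apply, circlePt_apply_zero, circlePt_apply_one, sin_sub]
  ring

lemma det2_circlePt_center (o : Plane) (r α β : ℝ) :
    det2 (circlePt o r β - circlePt o r α) (o - circlePt o r α) = r ^ 2 * sin (β - α) := by
  simp only [det2, PiLp.sub_apply, circlePt_apply_zero, circlePt_apply_one, sin_sub]
  ring

lemma det2_circlePt (o : Plane) (r α β γ : ℝ) :
    det2 (circlePt o r β - circlePt o r α) (circlePt o r γ - circlePt o r α)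
      = 4 * r ^ 2 * sin ((β - α) / 2) * sin ((γ - β) / 2) * sin ((γ - α) / 2) := by
  have h : (γ - β) / 2 = (γ + α) / 2 - (β + α) / 2 := by ring
  simp only [det2, PiLp.sub_apply, circlePt_apply_zero, circlePt_apply_one,
    add_sub_add_left_eq_sub, ← mul_sub]
  rw [h, sin_sub, cos_sub_cos, sin_sub_sin, sin_sub_sin, cos_sub_cos]
  ring

lemma det2_circlePt_pos {r : ℝ} (hr : r ≠ 0) (o : Plane) {α β γ : ℝ} (hαβ : α < β)
    (hβγ : β < γ) (hγα : γ < α + 2 * π) :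
    0 < det2 (circlePt o r β - circlePt o r α) (circlePt o r γ - circlePt o r α) := by
  have hsin : ∀ t, 0 < t → t < 2 * π → 0 < sin (t / 2) := fun t h₀ h₁ ↦
    sin_pos_of_pos_of_lt_pi (by linarith) (by linarith)
  rw [det2_circlePt]
  have := hsin (β - α) (by linarith) (by linarith)
  have := hsin (γ - β) (by linarith) (by linarith)
  have := hsin (γ - α) (by linarith) (by linarith)
  positivity

theorem not_disjoint_circlePt_chords {r : ℝ} (hr : r ≠ 0) (o : Plane) {a b c d : ℝ}
    (hab : a < b) (hbc : b < c) (hcd : c < d) (hda : d < a + 2 * π) :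
    ¬ Disjoint (segment ℝ (circlePt o r a) (circlePt o r c))
      (segment ℝ (circlePt o r b) (circlePt o r d)) := by
  have hd : circlePt o r (a + 2 * π) = circlePt o r a := by
    simpa using circlePt_add_int_mul_two_pi o r a 1
  apply not_disjoint_segment_of_det2_mul_neg
  · rw [det2_swap]
    nlinarith [det2_circlePt_pos hr o hab hbc (by linarith),
      det2_circlePt_pos hr o (hab.trans hbc) hcd hda]
  · rw [det2_swap _ (circlePt o r c - _), ← hd]
    nlinarith [det2_circlePt_pos hr o (hbc.trans hcd) (by linarith : d < a + 2 * π) (by linarith),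
      det2_circlePt_pos hr o hbc hcd (by linarith)]

theorem not_disjoint_circlePt_chord_radius {r : ℝ} (hr : r ≠ 0) (o : Plane) {a ψ c : ℝ}
    (haψ : a < ψ) (hψc : ψ < c) (hca : c - a < π) :
    ¬ Disjoint (segment ℝ (circlePt o r a) (circlePt o r c))
      (segment ℝ o (circlePt o r ψ)) := by
  have hr2 : 0 < r ^ 2 := by positivity
  apply not_disjoint_segment_of_det2_mul_neg
  · rw [det2_circlePt_center, det2_swap]
    exact mul_neg_of_pos_of_neg (mul_pos hr2 (sin_pos_of_pos_of_lt_pi (by linarith) hca))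
      (neg_neg_of_pos (det2_circlePt_pos hr o haψ hψc (by linarith [pi_pos])))
  · rw [det2_circlePt_sub_center, det2_circlePt_sub_center, ← neg_sub, sin_neg]
    have hψa := sin_pos_of_pos_of_lt_pi (by linarith : 0 < ψ - a) (by linarith)
    have hcψ := sin_pos_of_pos_of_lt_pi (by linarith : 0 < c - ψ) (by linarith)
    exact mul_neg_of_neg_of_pos (mul_neg_of_pos_of_neg hr2 (neg_neg_of_pos hψa)) (mul_pos hr2 hcψ)

lemma oangle_planePt_cos_sin (α β : ℝ) :
    planeOrientation.oangle (planePt (cos α) (sin α)) (planePt (cos β) (sin β))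
      = (β - α : ℝ) := by
  have hk : planeOrientation.kahler (planePt (cos α) (sin α)) (planePt (cos β) (sin β))
      = cos (β - α) + sin (β - α) * Complex.I := by
    rw [Orientation.kahler_apply_apply, planeOrientation_areaForm, inner_plane, det2]
    simp only [planePt_apply_zero, planePt_apply_one, cos_sub, sin_sub, Complex.real_smul]
    push_cast
    ring
  have h := Complex.arg_cos_add_sin_mul_I_coe_angle ((β - α : ℝ) : Real.Angle)
  rw [Real.Angle.cos_coe, Real.Angle.sin_coe] at h
  rw [Orientation.oangle, hk, h]

lemma oangle_circlePt {r : ℝ} (hr : 0 < r) (o : Plane) (α β : ℝ) :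
    planeOrientation.oangle (circlePt o r α - o) (circlePt o r β - o) = (β - α : ℝ) := by
  simp only [circlePt, add_sub_cancel_left, planeOrientation.oangle_smul_left_of_pos _ _ hr,
    planeOrientation.oangle_smul_right_of_pos _ _ hr, oangle_planePt_cos_sin]

def arcPt (o : Plane) (r θ₀ δ : ℝ) (k : ℕ) : Plane := circlePt o r (θ₀ + k * δ)

section ArcPt

variable {m : ℕ} {δ : ℝ}

lemma pos_or_neg_of_abs_mul_eq_two_pi (hδ : |δ| * m = 2 * π) :
    (0 < δ ∧ δ * m = 2 * π) ∨ (δ < 0 ∧ -δ * m = 2 * π) := by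
  have hδ0 : δ ≠ 0 := by rintro rfl; simp at hδ
  rcases hδ0.lt_or_gt with h | h
  · exact .inr ⟨h, abs_of_neg h ▸ hδ⟩
  · exact .inl ⟨h, abs_of_pos h ▸ hδ⟩

lemma circlePt_add_int_mul (hδ : |δ| * m = 2 * π) (o : Plane) (r θ : ℝ) (j : ℤ) :
    circlePt o r (θ + j * m * δ) = circlePt o r θ := by
  rcases pos_or_neg_of_abs_mul_eq_two_pi hδ with ⟨-, hδ⟩ | ⟨-, hδ⟩
  · rw [mul_assoc, mul_comm (m : ℝ), hδ, circlePt_add_int_mul_two_pi]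
  · rw [show θ + j * m * δ = θ + ((-j : ℤ) : ℝ) * (2 * π) by rw [← hδ]; push_cast; ring,
      circlePt_add_int_mul_two_pi]

lemma arcPt_eq_of_modEq (hδ : |δ| * m = 2 * π) (o : Plane) (r θ₀ : ℝ) {a b : ℕ}
    (hab : a ≡ b [MOD m]) : arcPt o r θ₀ δ a = arcPt o r θ₀ δ b := by
  obtain ⟨j, hj⟩ := Nat.modEq_iff_dvd.1 hab
  have hj' : (b : ℝ) = a + j * m := by
    have : ((b : ℤ) : ℝ) - (a : ℤ) = (m : ℤ) * j := by exact_mod_cast hj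
    push_cast at this; linarith
  rw [arcPt, arcPt, hj', show θ₀ + (a + j * m) * δ = θ₀ + a * δ + j * m * δ by ring,
    circlePt_add_int_mul hδ]

lemma arcPt_neg (hδ : |δ| * m = 2 * π) (o : Plane) (r θ₀ : ℝ) {k : ℕ} (hk : k ≤ m) :
    arcPt o r θ₀ (-δ) k = arcPt o r θ₀ δ (m - k) := by
  rw [arcPt, arcPt, Nat.cast_sub hk, ← circlePt_add_int_mul hδ o r _ 1]
  congr 1
  push_cast
  ring

theorem not_disjoint_arcPt_chords {r : ℝ} (hr : r ≠ 0) (hδ : |δ| * m = 2 * π) (o : Plane)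
    (θ₀ : ℝ) {a b c d : ℕ} (hab : a < b) (hbc : b < c) (hcd : c < d) (hda : d < a + m) :
    ¬ Disjoint (segment ℝ (arcPt o r θ₀ δ a) (arcPt o r θ₀ δ c))
      (segment ℝ (arcPt o r θ₀ δ b) (arcPt o r θ₀ δ d)) := by
  have hab' : (a : ℝ) < b := by exact_mod_cast hab
  have hbc' : (b : ℝ) < c := by exact_mod_cast hbc
  have hcd' : (c : ℝ) < d := by exact_mod_cast hcd
  have hda' : (d : ℝ) < a + m := by exact_mod_cast hda
  rcases pos_or_neg_of_abs_mul_eq_two_pi hδ with ⟨hpos, hδ⟩ | ⟨hneg, hδ⟩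
  · exact not_disjoint_circlePt_chords hr o (by nlinarith) (by nlinarith) (by nlinarith)
      (by nlinarith)
  · rw [segment_symm ℝ (arcPt o r θ₀ δ a), segment_symm ℝ (arcPt o r θ₀ δ b),
      disjoint_comm]
    exact not_disjoint_circlePt_chords hr o (by nlinarith) (by nlinarith) (by nlinarith)
      (by nlinarith)

theorem not_disjoint_arcPt_chord_radius {r : ℝ} (hr : r ≠ 0) (hδ : |δ| * m = 2 * π)
    (o : Plane) (θ₀ : ℝ) {a ψ c : ℕ} (haψ : a < ψ) (hψc : ψ < c)
    (hca : 2 * (c - a) < m) :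
    ¬ Disjoint (segment ℝ (arcPt o r θ₀ δ a) (arcPt o r θ₀ δ c))
      (segment ℝ o (arcPt o r θ₀ δ ψ)) := by
  have haψ' : (a : ℝ) < ψ := by exact_mod_cast haψ
  have hψc' : (ψ : ℝ) < c := by exact_mod_cast hψc
  have hca' : 2 * ((c : ℝ) - a) < m := by
    rw [← Nat.cast_sub (haψ.trans hψc).le]; exact_mod_cast hca
  rcases pos_or_neg_of_abs_mul_eq_two_pi hδ with ⟨hpos, hδ⟩ | ⟨hneg, hδ⟩
  · exact not_disjoint_circlePt_chord_radius hr o (by nlinarith) (by nlinarith) (by nlinarith)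
  · rw [segment_symm ℝ (arcPt o r θ₀ δ a)]
    exact not_disjoint_circlePt_chord_radius hr o (by nlinarith) (by nlinarith) (by nlinarith)

end ArcPt

lemma exists_iff_not_succ_of_iff_not (p : ℕ → Prop) {a b : ℕ} (hab : a ≤ b)
    (h : p a ↔ ¬ p b) :
    ∃ s, a ≤ s ∧ s < b ∧ (p s ↔ ¬ p (s + 1)) := by
  induction b, hab using Nat.le_induction with
  | base => tauto
  | succ b hab ih =>
    by_cases hb : p b ↔ ¬ p (b + 1)
    · exact ⟨b, hab, b.lt_succ_self, hb⟩
    · obtain ⟨s, has, hsb, hs⟩ := ih (by tauto)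
      exact ⟨s, has, hsb.trans b.lt_succ_self, hs⟩

structure IsClosedPolygon (m : ℕ) (w : ℕ → Plane) : Prop where
  injOn : Set.InjOn w (Set.Iic m)
  wrap : w (m + 1) = w 0
  disjoint : ∀ a b, a + 1 < b → b ≤ m → (a = 0 → b < m) →
    Disjoint (segment ℝ (w a) (w (a + 1))) (segment ℝ (w b) (w (b + 1)))

/-- `P t` is the position of the circle vertex `w t` on the regular `m`-gon, counted from `w 0`
in the direction given by the sign of `δ`. -/
structure IsCenteredPolygon (m : ℕ) (o : Plane) (r θ₀ δ : ℝ) (w : ℕ → Plane)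
    (P : ℕ → ℕ) : Prop extends IsClosedPolygon m w where
  radius_ne_zero : r ≠ 0
  step : |δ| * m = 2 * π
  center : w m = o
  label_lt : ∀ t < m, P t < m
  label_zero : P 0 = 0
  eq_arcPt : ∀ t < m, w t = arcPt o r θ₀ δ (P t)

namespace IsCenteredPolygon

variable {m : ℕ} {o : Plane} {r θ₀ δ : ℝ} {w : ℕ → Plane} {P : ℕ → ℕ}

lemma injOn_label (h : IsCenteredPolygon m o r θ₀ δ w P) : Set.InjOn P (Set.Iio m) :=
  fun a ha b hb hab ↦ h.injOn (Set.mem_Iic.2 (le_of_lt ha)) (Set.mem_Iic.2 (le_of_lt hb))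
    (by rw [h.eq_arcPt a ha, h.eq_arcPt b hb, hab])

lemma exists_label_eq (h : IsCenteredPolygon m o r θ₀ δ w P) {j : ℕ} (hj : j < m) :
    ∃ s < m, P s = j := by
  have hbij := ((Set.finite_Iio m).injOn_iff_bijOn_of_mapsTo h.label_lt).1 h.injOn_label
  obtain ⟨s, hs, hsj⟩ := hbij.surjOn (Set.mem_Iio.2 hj)
  exact ⟨s, hs, hsj⟩

lemma lt_label (h : IsCenteredPolygon m o r θ₀ δ w P) {t s : ℕ} (hpre : ∀ k ≤ t, P k = k)
    (hts : t < s) (hs : s < m) : t < P s := by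
  by_contra! hst
  have := h.injOn_label hs (Set.mem_Iio.2 (hst.trans_lt (hts.trans hs))) (hpre _ hst).symm
  omega

lemma exists_label_eq_of_lt (h : IsCenteredPolygon m o r θ₀ δ w P) {t j : ℕ}
    (hpre : ∀ k ≤ t, P k = k) (hj : j < m) (htj : t < j) (hjq : j ≠ P (t + 1)) :
    ∃ s < m, t + 1 < s ∧ P s = j := by
  obtain ⟨s, hs, hsj⟩ := h.exists_label_eq hj
  refine ⟨s, hs, ?_, hsj⟩
  by_contra! hst
  rcases Nat.lt_or_ge s (t + 1) with hst' | hst'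
  · have := hpre s (by omega); omega
  · obtain rfl : s = t + 1 := by omega
    exact hjq hsj.symm

/-- The positions `t + 1` and `m - 1`, on either side of the jump, are both visited later, so
the rest of the path crosses the jumping chord. -/
theorem not_skip (h : IsCenteredPolygon m o r θ₀ δ w P) {t : ℕ} (hpre : ∀ k ≤ t, P k = k)
    (ht : t + 1 < m) (hq₁ : t + 1 < P (t + 1)) (hq₂ : P (t + 1) + 1 < m) : False := by
  set q := P (t + 1)
  have hne : ∀ s, t + 1 < s → s < m → P s ≠ q := fun s hs hsm hsq ↦
    absurd (h.injOn_label hsm ht hsq) (by omega)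
  obtain ⟨sA, hsA, htsA, hA⟩ :=
    h.exists_label_eq_of_lt hpre (j := t + 1) ht (by omega) (by omega)
  obtain ⟨sB, hsB, htsB, hB⟩ :=
    h.exists_label_eq_of_lt hpre (j := m - 1) (by omega) (by omega) (by omega)
  obtain ⟨s, hts, hsm, hs⟩ :
      ∃ s, t + 1 < s ∧ s + 1 < m ∧ (P s < q ↔ ¬ P (s + 1) < q) := by
    rcases le_total sA sB with hAB | hBA
    · obtain ⟨s, h₁, h₂, hs⟩ :=
        exists_iff_not_succ_of_iff_not (P · < q) hAB (by simp only [hA, hB]; omega)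
      exact ⟨s, by omega, by omega, hs⟩
    · obtain ⟨s, h₁, h₂, hs⟩ :=
        exists_iff_not_succ_of_iff_not (P · < q) hBA (by simp only [hA, hB]; omega)
      exact ⟨s, by omega, by omega, hs⟩
  have hdisj := h.disjoint t s (by omega) (by omega) (by omega)
  rw [h.eq_arcPt t (by omega), h.eq_arcPt (t + 1) ht, h.eq_arcPt s (by omega),
    h.eq_arcPt (s + 1) hsm, hpre t le_rfl] at hdisj
  have h₁ := h.lt_label hpre (by omega : t < s) (by omega)
  have h₂ := h.lt_label hpre (by omega : t < s + 1) hsm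
  have h₃ := hne s (by omega) (by omega)
  have h₄ := hne (s + 1) (by omega) hsm
  have h₅ := h.label_lt (s + 1) hsm
  have h₆ := h.label_lt s (by omega)
  by_cases hsq : P s < q
  · exact not_disjoint_arcPt_chords h.radius_ne_zero h.step o θ₀ h₁ hsq (by omega) (by omega)
      hdisj
  · rw [segment_symm ℝ (arcPt o r θ₀ δ (P s))] at hdisj
    exact not_disjoint_arcPt_chords h.radius_ne_zero h.step o θ₀ h₂ (by omega) (by omega)
      (by omega) hdisj

/-- As `m` is odd, the jumping chord cuts off an arc of fewer than `m / 2` steps; that arc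
contains either position `0`, where the radius `[o, w 0]` ends, or the position of `w (m - 1)`,
where the radius `[w (m - 1), o]` ends. -/
theorem not_jump_to_last (h : IsCenteredPolygon m o r θ₀ δ w P) (hodd : Odd m) {t : ℕ}
    (ht₀ : 1 ≤ t) (ht : t + 2 < m) (hpre : ∀ k ≤ t, P k = k) (hq : P (t + 1) = m - 1) :
    False := by
  have hchord : w t = arcPt o r θ₀ δ t ∧ w (t + 1) = arcPt o r θ₀ δ (m - 1) := by
    rw [h.eq_arcPt t (by omega), h.eq_arcPt (t + 1) (by omega), hpre t le_rfl, hq]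
    exact ⟨rfl, rfl⟩
  have hne : 2 * (t + 1) ≠ m := fun h' ↦ Nat.not_even_iff_odd.2 hodd (h' ▸ even_two_mul _)
  rcases hne.lt_or_gt with hs | hl
  · have hdisj := h.disjoint t m (by omega) le_rfl (by omega)
    rw [hchord.1, hchord.2, h.center, h.wrap, h.eq_arcPt 0 (by omega), h.label_zero,
      arcPt_eq_of_modEq h.step o r θ₀ (show 0 ≡ m [MOD m] by simp [Nat.ModEq]),
      arcPt_eq_of_modEq h.step o r θ₀ (show t ≡ t + m [MOD m] by simp [Nat.ModEq]),
      segment_symm] at hdisj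
    exact not_disjoint_arcPt_chord_radius h.radius_ne_zero h.step o θ₀ (by omega : m - 1 < m)
      (by omega) (by omega) hdisj
  · have hdisj := h.disjoint t (m - 1) (by omega) (by omega) (by omega)
    rw [hchord.1, hchord.2, Nat.sub_add_cancel (by omega), h.center,
      h.eq_arcPt (m - 1) (by omega), segment_symm ℝ _ o] at hdisj
    have h₁ := h.lt_label hpre (by omega : t < m - 1) (by omega)
    have h₂ : P (m - 1) ≠ m - 1 := fun h' ↦
      absurd (h.injOn_label (by omega : m - 1 < m) (by omega : t + 1 < m) (h'.trans hq.symm))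
        (by omega)
    have h₃ := h.label_lt (m - 1) (by omega)
    exact not_disjoint_arcPt_chord_radius h.radius_ne_zero h.step o θ₀ h₁ (by omega) (by omega)
      hdisj

lemma label_one (h : IsCenteredPolygon m o r θ₀ δ w P) (hm : 1 < m) :
    P 1 = 1 ∨ P 1 = m - 1 := by
  have h₁ := h.label_lt 1 hm
  have h₀ : P 1 ≠ 0 := fun h' ↦
    absurd (h.injOn_label hm (by omega : 0 < m) (h'.trans h.label_zero.symm)) one_ne_zero
  have : P (0 + 1) = P 1 := rfl
  by_contra! hne
  exact h.not_skip (t := 0) (fun k hk ↦ by rw [Nat.le_zero.1 hk, h.label_zero]) hm (by omega)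
    (by omega)

theorem label_eq_self (h : IsCenteredPolygon m o r θ₀ δ w P) (hodd : Odd m) (h₁ : P 1 = 1) :
    ∀ t < m, P t = t := by
  intro t
  induction t using Nat.strong_induction_on with
  | _ t ih =>
    intro ht
    match t, ih with
    | 0, _ => exact h.label_zero
    | 1, _ => exact h₁
    | t + 2, ih =>
      have hpre : ∀ k ≤ t + 1, P k = k := fun k hk ↦ ih k (by omega) (by omega)
      have hlt := h.lt_label hpre (by omega : t + 1 < t + 2) ht
      have hq := h.label_lt (t + 2) ht
      have : P (t + 1 + 1) = P (t + 2) := rfl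
      by_contra hne
      by_cases hlast : P (t + 2) = m - 1
      · exact h.not_jump_to_last hodd (by omega) (by omega) hpre hlast
      · exact h.not_skip hpre ht (by omega) (by omega)

lemma reflect (h : IsCenteredPolygon m o r θ₀ δ w P) :
    IsCenteredPolygon m o r θ₀ (-δ) w (fun t ↦ if P t = 0 then 0 else m - P t) where
  toIsClosedPolygon := h.toIsClosedPolygon
  radius_ne_zero := h.radius_ne_zero
  step := by rw [abs_neg]; exact h.step
  center := h.center
  label_lt t ht := by have := h.label_lt t ht; split_ifs <;> omega
  label_zero := by simp [h.label_zero]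
  eq_arcPt t ht := by
    have := h.label_lt t ht
    rw [h.eq_arcPt t ht]
    split_ifs with h₀
    · simp [arcPt, h₀]
    · rw [arcPt_neg h.step o r θ₀ (by omega), Nat.sub_sub_self this.le]

theorem exists_eq_arcPt (h : IsCenteredPolygon m o r θ₀ δ w P) (hodd : Odd m) (hm : 1 < m) :
    ∃ δ', (δ' = δ ∨ δ' = -δ) ∧ ∀ t < m, w t = arcPt o r θ₀ δ' t := by
  rcases h.label_one hm with h₁ | h₁
  · exact ⟨δ, .inl rfl, fun t ht ↦ by rw [h.eq_arcPt t ht, h.label_eq_self hodd h₁ t ht]⟩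
  · have h₁' : (if P 1 = 0 then 0 else m - P 1) = 1 := by rw [h₁, if_neg (by omega)]; omega
    exact ⟨-δ, .inr rfl, fun t ht ↦ by
      rw [h.reflect.eq_arcPt t ht, h.reflect.label_eq_self hodd h₁' t ht]⟩

end IsCenteredPolygon

lemma natCast_zmod_inj {n a b : ℕ} (ha : a < n) (hb : b < n) : (a : ZMod n) = b ↔ a = b := by
  rw [ZMod.natCast_eq_natCast_iff', Nat.mod_eq_of_lt ha, Nat.mod_eq_of_lt hb]

lemma add_one_add_natCast_self {m : ℕ} (i : ZMod (m + 1)) : i + 1 + (m : ZMod (m + 1)) = i := by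
  have := ZMod.natCast_self (m + 1)
  push_cast at this
  linear_combination this

lemma add_one_add_natCast_add_one {n : ℕ} (i : ZMod n) (k : ℕ) :
    i + 1 + (k : ZMod n) + 1 = i + 1 + ((k + 1 : ℕ) : ZMod n) := by
  push_cast; ring

theorem IsPolygonization.isClosedPolygon {m : ℕ} {S : Set Plane} {v : ZMod (m + 1) → Plane}
    (hv : IsPolygonization (m + 1) S v) (i : ZMod (m + 1)) :
    IsClosedPolygon m (fun t : ℕ ↦ v (i + 1 + t)) where
  injOn a ha b hb hab := by
    simp only [Set.mem_Iic] at ha hb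
    exact (natCast_zmod_inj (by omega) (by omega)).1 (add_left_cancel (hv.1 hab))
  wrap := by
    show v _ = v _
    congr 1
    push_cast
    linear_combination add_one_add_natCast_self i
  disjoint a b hab hb ha := by
    simp only [← add_one_add_natCast_add_one]
    refine hv.2.2.2 _ _ (fun h ↦ ?_) (fun h ↦ ?_) (fun h ↦ ?_)
    · have := (natCast_zmod_inj (by omega) (by omega)).1 (add_left_cancel h); omega
    · rw [add_one_add_natCast_add_one] at h
      have := (natCast_zmod_inj (by omega) (by omega)).1 (add_left_cancel h); omega
    · rw [add_one_add_natCast_add_one] at h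
      have := (ZMod.natCast_eq_natCast_iff' _ _ _).1 (add_left_cancel h)
      rcases hb.lt_or_eq with hb | rfl
      · rw [Nat.mod_eq_of_lt (by omega), Nat.mod_eq_of_lt (by omega)] at this; omega
      · rw [Nat.mod_self, Nat.mod_eq_of_lt (by omega)] at this; omega

lemma abs_two_pi_div_mul_self {m : ℕ} (hm : 0 < m) : |2 * π / m| * m = 2 * π := by
  rw [abs_of_pos (by positivity)]
  field_simp

theorem IsClosedPolygon.exists_isCenteredPolygon {m : ℕ} (hm : 0 < m) {o : Plane} {r : ℝ}
    (hr : r ≠ 0) {w : ℕ → Plane} (hw : IsClosedPolygon m w) (hc : w m = o)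
    (hlab : ∀ t < m, ∃ k < m, w t = circlePt o r (2 * π * k / m)) :
    ∃ θ₀ P, IsCenteredPolygon m o r θ₀ (2 * π / m) w P := by
  choose! k hk hwk using hlab
  refine ⟨k 0 * (2 * π / m), fun t ↦ (k t + m - k 0) % m,
    { hw with
      radius_ne_zero := hr
      step := abs_two_pi_div_mul_self hm
      center := hc
      label_lt := fun t _ ↦ Nat.mod_lt _ hm
      label_zero := by simp
      eq_arcPt := fun t ht ↦ ?_ }⟩
  have hmod : k t ≡ k 0 + (k t + m - k 0) % m [MOD m] := by
    have := hk 0 hm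
    rw [Nat.ModEq, Nat.add_mod_mod, show k 0 + (k t + m - k 0) = k t + m by omega,
      Nat.add_mod_right]
  calc w t = arcPt o r 0 (2 * π / m) (k t) := by rw [hwk t ht, arcPt]; congr 1; ring
    _ = arcPt o r 0 (2 * π / m) (k 0 + (k t + m - k 0) % m) :=
      arcPt_eq_of_modEq (abs_two_pi_div_mul_self hm) o r 0 hmod
    _ = arcPt o r (k 0 * (2 * π / m)) (2 * π / m) ((k t + m - k 0) % m) := by
      simp only [arcPt]; push_cast; ring_nf

theorem IsPolygonization.exists_isCenteredPolygon {m : ℕ} (hm : 0 < m) {o : Plane} {r : ℝ}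
    (hr : r ≠ 0) {S : Set Plane}
    (hS : S = insert o ((fun k : ℕ ↦ circlePt o r (2 * π * k / m)) '' Set.Iio m))
    {v : ZMod (m + 1) → Plane} (hv : IsPolygonization (m + 1) S v) {i : ZMod (m + 1)}
    (hi : v i = o) :
    ∃ θ₀ P, IsCenteredPolygon m o r θ₀ (2 * π / m) (fun t ↦ v (i + 1 + t)) P := by
  have hpoly := hv.isClosedPolygon i
  have hcenter : v (i + 1 + m) = o := by rw [add_one_add_natCast_self, hi]
  refine hpoly.exists_isCenteredPolygon hm hr hcenter fun t ht ↦ ?_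
  have hmem : v (i + 1 + t) ∈ S := hv.2.1 ▸ Set.mem_range_self _
  rw [hS] at hmem
  rcases hmem with hto | ⟨k, hk, hkt⟩
  · exact absurd (hpoly.injOn (Set.mem_Iic.2 ht.le) (Set.mem_Iic.2 le_rfl)
      (hto.trans hcenter.symm)) ht.ne
  · exact ⟨k, hk, hkt.symm⟩

lemma sum_range_zmod {n : ℕ} [NeZero n] (f : ZMod n → ℝ) :
    ∑ j ∈ Finset.range n, f j = ∑ j : ZMod n, f j :=
  Finset.sum_nbij' (fun j ↦ (j : ZMod n)) ZMod.val (fun _ _ ↦ Finset.mem_univ _)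
    (fun j _ ↦ Finset.mem_range.2 (ZMod.val_lt j))
    (fun _ hj ↦ ZMod.val_natCast_of_lt (Finset.mem_range.1 hj))
    (fun j _ ↦ ZMod.natCast_zmod_val j) (fun _ _ ↦ rfl)

lemma sum_det2_sub {n : ℕ} [NeZero n] (v : ZMod n → Plane) (o : Plane) :
    ∑ j : ZMod n, det2 (v j - o) (v (j + 1) - o) = ∑ j : ZMod n, det2 (v j) (v (j + 1)) := by
  have hexpand : ∀ p q : Plane, det2 (p - o) (q - o) = det2 p q - det2 p o + det2 q o := by
    intro p q; simp only [det2, PiLp.sub_apply]; ring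
  have hshift : ∑ j : ZMod n, det2 (v (j + 1)) o = ∑ j : ZMod n, det2 (v j) o :=
    Equiv.sum_comp (Equiv.addRight 1) (fun j ↦ det2 (v j) o)
  simp only [hexpand, Finset.sum_add_distrib, Finset.sum_sub_distrib, hshift]
  ring

theorem sum_det2_of_fan {m : ℕ} (hm : 1 ≤ m) {v : ZMod (m + 1) → Plane} {o : Plane}
    {r θ₀ δ : ℝ} {i : ZMod (m + 1)} (hi : v i = o)
    (hfan : ∀ t < m, v (i + 1 + t) = circlePt o r (θ₀ + t * δ)) :
    ∑ j ∈ Finset.range (m + 1), det2 (v j) (v (j + 1)) = (m - 1) * (r ^ 2 * sin δ) := by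
  rw [sum_range_zmod (fun j ↦ det2 (v j) (v (j + 1))), ← sum_det2_sub v o,
    ← Equiv.sum_comp (Equiv.addLeft (i + 1))]
  simp only [Equiv.coe_addLeft]
  rw [← sum_range_zmod (fun j ↦ det2 (v (i + 1 + j) - o) (v (i + 1 + j + 1) - o))]
  obtain ⟨k, rfl⟩ : ∃ k, m = k + 1 := ⟨m - 1, by omega⟩
  have hlast : v (i + 1 + ((k + 1 : ℕ) : ZMod (k + 1 + 1))) = o := by
    rw [add_one_add_natCast_self, hi]
  rw [Finset.sum_range_succ, Finset.sum_range_succ, add_one_add_natCast_add_one, hlast]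
  have hzero : ∀ p : Plane, det2 p 0 = 0 ∧ det2 0 p = 0 := fun p ↦ by simp [det2]
  rw [sub_self, (hzero _).1, (hzero _).2, add_zero, add_zero]
  rw [Finset.sum_congr rfl (g := fun _ ↦ r ^ 2 * sin δ)]
  · simp
  intro t ht
  have ht : t < k := Finset.mem_range.1 ht
  rw [add_one_add_natCast_add_one, hfan t (by omega), hfan (t + 1) (by omega),
    det2_circlePt_sub_center]
  push_cast; ring_nf

theorem interiorAngle_eq_two_pi_sub {n : ℕ} {v : ZMod n → Plane} {i : ZMod n} {o : Plane}
    {r θ x : ℝ} (hr : 0 < r) (hi : v i = o) (hnext : v (i + 1) = circlePt o r θ)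
    (hprev : v (i - 1) = circlePt o r (θ - x)) (hx₀ : 0 < x) (hxπ : x < π) :
    interiorAngle n v i = 2 * π - x := by
  have h : (planeOrientation.oangle (v (i + 1) - v i) (v (i - 1) - v i)).toReal = -x := by
    rw [hi, hnext, hprev, oangle_circlePt hr, show θ - x - θ = -x by ring,
      Real.Angle.toReal_coe_eq_self_iff_mem_Ioc.2 ⟨by linarith, by linarith⟩]
  simp only [interiorAngle, h]
  rw [if_neg (by linarith)]
  ring

lemma two_pi_div_lt_pi {m : ℕ} (hm : 3 ≤ m) : 2 * π / m < π := by
  have hm' : (3 : ℝ) ≤ m := by exact_mod_cast hm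
  rw [div_lt_iff₀ (by linarith)]
  nlinarith [pi_pos]

theorem interiorAngle_of_fan {m : ℕ} (hm : 3 ≤ m) {v : ZMod (m + 1) → Plane}
    {i : ZMod (m + 1)} {o : Plane} {r θ₀ : ℝ} (hr : 0 < r) (hi : v i = o)
    (hfan : ∀ t < m, v (i + 1 + t) = arcPt o r θ₀ (2 * π / m) t) :
    interiorAngle (m + 1) v i = 2 * π - 2 * π / m := by
  refine interiorAngle_eq_two_pi_sub (θ := θ₀) hr hi ?_ ?_ (by positivity) (two_pi_div_lt_pi hm)
  · simpa [arcPt] using hfan 0 (by omega)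
  · have hidx : i - 1 = i + 1 + ((m - 1 : ℕ) : ZMod (m + 1)) := by
      rw [Nat.cast_sub (by omega)]
      linear_combination -add_one_add_natCast_self i
    rw [hidx, hfan (m - 1) (by omega),
      ← arcPt_neg (abs_two_pi_div_mul_self (by omega)) o r θ₀ (by omega : 1 ≤ m)]
    simp [arcPt, sub_eq_add_neg]

theorem not_counterclockwise_of_fan {m : ℕ} (hm : 3 ≤ m) {v : ZMod (m + 1) → Plane}
    {i : ZMod (m + 1)} {o : Plane} {r θ₀ : ℝ} (hr : r ≠ 0) (hi : v i = o)
    (hfan : ∀ t < m, v (i + 1 + t) = arcPt o r θ₀ (-(2 * π / m)) t) :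
    ¬ Counterclockwise (m + 1) v := by
  have hm' : (3 : ℝ) ≤ m := by exact_mod_cast hm
  have hsin := sin_pos_of_pos_of_lt_pi (by positivity) (two_pi_div_lt_pi hm)
  rw [Counterclockwise, sum_det2_of_fan (by omega) hi hfan, sin_neg, not_lt]
  nlinarith [mul_pos (mul_pos (by linarith : (0 : ℝ) < m - 1) (by positivity : 0 < r ^ 2)) hsin]

/-- Let `n ≥ 4` with `n − 1` odd, and let `S` consist of a point `o` together with the `n − 1`
points equally spaced around the circle of center `o` and radius `r > 0`. Then every
counterclockwise polygonization of `S` has an interior angle of measure at least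
`2π − 2π/(n−1)`. -/
theorem center_point_construction_angle_lower_bound (n : ℕ) (hn : 4 ≤ n)
    (hodd : Odd (n - 1)) (o : Plane) (r : ℝ) (hr : 0 < r) (S : Set Plane)
    (hS : S = insert o
      ((fun k : ℕ => o + r • planePt (Real.cos (2 * π * (k : ℝ) / ((n : ℝ) - 1)))
          (Real.sin (2 * π * (k : ℝ) / ((n : ℝ) - 1)))) '' Set.Iio (n - 1))) :
    ∀ v : ZMod n → Plane, IsPolygonization n S v → Counterclockwise n v →
      ∃ i : ZMod n, 2 * π - 2 * π / ((n : ℝ) - 1) ≤ interiorAngle n v i := by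
  intro v hv hccw
  obtain ⟨m, rfl⟩ : ∃ m, n = m + 1 := ⟨n - 1, by omega⟩
  simp only [Nat.add_sub_cancel, Nat.cast_add, Nat.cast_one, add_sub_cancel_right] at hodd hS ⊢
  obtain ⟨i, hi⟩ : o ∈ Set.range v := hv.2.1 ▸ hS ▸ Set.mem_insert o _
  obtain ⟨θ₀, P, hP⟩ := hv.exists_isCenteredPolygon (by omega) hr.ne' hS hi
  obtain ⟨δ, hδ | hδ, hfan⟩ := hP.exists_eq_arcPt hodd (by omega)
  · exact ⟨i, (interiorAngle_of_fan (by omega) hr hi (hδ ▸ hfan)).ge⟩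
  · exact absurd hccw (not_counterclockwise_of_fan (by omega) hr.ne' hi (hδ ▸ hfan))
end
end
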